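/- arXiv:1909.00975 — 2 statements merged into one kernel-verified Lean document; each statement's English description precedes it below -/
import Mathlib

section
/- Let Ω ⊆ ℝ² be simply connected and ψ a C² solution of the maximal surface equation with |∇ψ| < 1 on Ω. If φ : Ω → ℝ satisfies φ_x = ψ_y/√(1−|∇ψ|²) and φ_y = −ψ_x/√(1−|∇ψ|²), then φ solves the minimal surface equation. Together with the forward direction, this gives a one-to-one correspondence (up to additive constants) between solutions of the minimal and maximal surface equations on Ω. -/
noncomputable def px (f : ℝ × ℝ → ℝ) (z : ℝ × ℝ) : ℝ := fderiv ℝ f z (1, 0)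

noncomputable def py (f : ℝ × ℝ → ℝ) (z : ℝ × ℝ) : ℝ := fderiv ℝ f z (0, 1)

/-- `W φ z = √(1 + |∇φ(z)|²)`. -/
noncomputable def W (φ : ℝ × ℝ → ℝ) (z : ℝ × ℝ) : ℝ :=
  Real.sqrt (1 + (px φ z) ^ 2 + (py φ z) ^ 2)

/-- `Wm ψ z = √(1 − |∇ψ(z)|²)`. -/
noncomputable def Wm (ψ : ℝ × ℝ → ℝ) (z : ℝ × ℝ) : ℝ :=
  Real.sqrt (1 - (px ψ z) ^ 2 - (py ψ z) ^ 2)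

/-- The minimal surface equation `div(∇φ/√(1+|∇φ|²)) = 0` on `Ω`. -/
def MinimalSurfaceEq (φ : ℝ × ℝ → ℝ) (Ω : Set (ℝ × ℝ)) : Prop :=
  ∀ z ∈ Ω, px (fun z => px φ z / W φ z) z + py (fun z => py φ z / W φ z) z = 0

/-- The maximal surface equation `div(∇ψ/√(1−|∇ψ|²)) = 0` on `Ω`. -/
def MaximalSurfaceEq (ψ : ℝ × ℝ → ℝ) (Ω : Set (ℝ × ℝ)) : Prop :=
  ∀ z ∈ Ω, px (fun z => px ψ z / Wm ψ z) z + py (fun z => py ψ z / Wm ψ z) z = 0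

/-! If `∇φ = (ψ_y, -ψ_x) / √(1 - |∇ψ|²)` with `|∇ψ| < 1`, then `√(1 + |∇φ|²) = 1 / √(1 - |∇ψ|²)`,
so the flux `∇φ / √(1 + |∇φ|²)` is the rotated gradient `(ψ_y, -ψ_x)`, whose divergence
`ψ_yx - ψ_xy` vanishes by the symmetry of second derivatives. Two such `φ` have the same
gradient on the connected open set `Ω`, hence differ by a constant. -/

open Filter Topology

def CalabiDual (φ ψ : ℝ × ℝ → ℝ) (Ω : Set (ℝ × ℝ)) : Prop :=
  ∀ z ∈ Ω, px φ z = py ψ z / Wm ψ z ∧ py φ z = -(px ψ z) / Wm ψ z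

lemma sqrt_one_add_div_sq_add_div_sq {a b : ℝ} (h : a ^ 2 + b ^ 2 < 1) :
    √(1 + (b / √(1 - a ^ 2 - b ^ 2)) ^ 2 + (-a / √(1 - a ^ 2 - b ^ 2)) ^ 2)
      = (√(1 - a ^ 2 - b ^ 2))⁻¹ := by
  have hpos : 0 < 1 - a ^ 2 - b ^ 2 := by linarith
  have hs : 0 < √(1 - a ^ 2 - b ^ 2) := Real.sqrt_pos.mpr hpos
  rw [← Real.sqrt_sq (inv_pos.mpr hs).le]
  congr 1
  field_simp
  rw [Real.sq_sqrt hpos.le]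
  ring

lemma flux_eq_rotated_grad {φ ψ : ℝ × ℝ → ℝ} {z : ℝ × ℝ}
    (hsp : px ψ z ^ 2 + py ψ z ^ 2 < 1)
    (hx : px φ z = py ψ z / Wm ψ z) (hy : py φ z = -(px ψ z) / Wm ψ z) :
    px φ z / W φ z = py ψ z ∧ py φ z / W φ z = -px ψ z := by
  have hs : 0 < Wm ψ z := Real.sqrt_pos.mpr (by linarith)
  have hW : W φ z = (Wm ψ z)⁻¹ := by
    rw [W, hx, hy]
    exact sqrt_one_add_div_sq_add_div_sq hsp
  rw [hW, hx, hy]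
  constructor <;> field_simp

lemma fderiv_fderiv_apply_comm {E F : Type*} [NormedAddCommGroup E] [NormedSpace ℝ E]
    [NormedAddCommGroup F] [NormedSpace ℝ F] {f : E → F} {x : E} (hf : ContDiffAt ℝ 2 f x)
    (u v : E) :
    fderiv ℝ (fun w => fderiv ℝ f w v) x u = fderiv ℝ (fun w => fderiv ℝ f w u) x v := by
  have hdd : DifferentiableAt ℝ (fderiv ℝ f) x :=
    (hf.fderiv_right (m := 1) (by norm_num)).differentiableAt one_ne_zero
  simp only [fderiv_clm_apply hdd (differentiableAt_const _), fderiv_fun_const, Pi.zero_apply,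
    ContinuousLinearMap.comp_zero, zero_add, ContinuousLinearMap.flip_apply]
  exact hf.isSymmSndFDerivAt (by simp) u v

lemma px_congr_of_eventuallyEq {f g : ℝ × ℝ → ℝ} {z : ℝ × ℝ} (h : f =ᶠ[𝓝 z] g) :
    px f z = px g z := by
  rw [px, h.fderiv_eq, px]

lemma py_congr_of_eventuallyEq {f g : ℝ × ℝ → ℝ} {z : ℝ × ℝ} (h : f =ᶠ[𝓝 z] g) :
    py f z = py g z := by
  rw [py, h.fderiv_eq, py]

lemma py_neg (f : ℝ × ℝ → ℝ) (z : ℝ × ℝ) : py (fun w => -f w) z = -py f z := by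
  simp [py, fderiv_fun_neg]

lemma fderiv_eq_of_px_eq_of_py_eq {f g : ℝ × ℝ → ℝ} {z : ℝ × ℝ}
    (hx : px f z = px g z) (hy : py f z = py g z) : fderiv ℝ f z = fderiv ℝ g z :=
  ContinuousLinearMap.prod_ext (ContinuousLinearMap.ext_ring hx)
    (ContinuousLinearMap.ext_ring hy)

theorem minimalSurfaceEq_of_calabiDual {Ω : Set (ℝ × ℝ)} (hΩ : IsOpen Ω) {φ ψ : ℝ × ℝ → ℝ}
    (hψ : ContDiffOn ℝ 2 ψ Ω) (hsp : ∀ z ∈ Ω, px ψ z ^ 2 + py ψ z ^ 2 < 1)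
    (hdual : CalabiDual φ ψ Ω) : MinimalSurfaceEq φ Ω := by
  intro z hz
  have hflux : ∀ᶠ w in 𝓝 z, px φ w / W φ w = py ψ w ∧ py φ w / W φ w = -px ψ w := by
    filter_upwards [hΩ.mem_nhds hz] with w hw
    exact flux_eq_rotated_grad (hsp w hw) (hdual w hw).1 (hdual w hw).2
  calc px (fun w => px φ w / W φ w) z + py (fun w => py φ w / W φ w) z
      = px (py ψ) z - py (px ψ) z := by
        rw [px_congr_of_eventuallyEq (hflux.mono fun _ h => h.1),
          py_congr_of_eventuallyEq (hflux.mono fun _ h => h.2), py_neg, sub_eq_add_neg]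
    _ = 0 := by
        rw [sub_eq_zero]
        exact fderiv_fderiv_apply_comm (hψ.contDiffAt (hΩ.mem_nhds hz)) _ _

theorem CalabiDual.exists_eq_add {Ω : Set (ℝ × ℝ)} (hΩ : IsOpen Ω) (hΩc : IsPreconnected Ω)
    {φ₁ φ₂ ψ : ℝ × ℝ → ℝ} (h₁ : DifferentiableOn ℝ φ₁ Ω) (h₂ : DifferentiableOn ℝ φ₂ Ω)
    (hd₁ : CalabiDual φ₁ ψ Ω) (hd₂ : CalabiDual φ₂ ψ Ω) : ∃ c : ℝ, ∀ z ∈ Ω, φ₁ z = φ₂ z + c :=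
  hΩ.exists_eq_add_of_fderiv_eq hΩc h₁ h₂ fun z hz =>
    fderiv_eq_of_px_eq_of_py_eq ((hd₁ z hz).1.trans (hd₂ z hz).1.symm)
      ((hd₁ z hz).2.trans (hd₂ z hz).2.symm)

theorem stmt_2_general (Ω : Set (ℝ × ℝ)) (hΩ : IsOpen Ω) (hsc : SimplyConnectedSpace Ω)
    (ψ : ℝ × ℝ → ℝ) (hψ : ContDiffOn ℝ 2 ψ Ω)
    (hsp : ∀ z ∈ Ω, (px ψ z) ^ 2 + (py ψ z) ^ 2 < 1)
    (φ : ℝ × ℝ → ℝ)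
    (hdual : ∀ z ∈ Ω, px φ z = py ψ z / Wm ψ z ∧ py φ z = -(px ψ z) / Wm ψ z) :
    MinimalSurfaceEq φ Ω ∧
    ∀ φ₁ φ₂ : ℝ × ℝ → ℝ, DifferentiableOn ℝ φ₁ Ω → DifferentiableOn ℝ φ₂ Ω →
      (∀ z ∈ Ω, px φ₁ z = py ψ z / Wm ψ z ∧ py φ₁ z = -(px ψ z) / Wm ψ z) →
      (∀ z ∈ Ω, px φ₂ z = py ψ z / Wm ψ z ∧ py φ₂ z = -(px ψ z) / Wm ψ z) →
      ∃ c : ℝ, ∀ z ∈ Ω, φ₁ z = φ₂ z + c :=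
  ⟨minimalSurfaceEq_of_calabiDual hΩ hψ hsp hdual, fun _ _ h₁ h₂ hd₁ hd₂ =>
    CalabiDual.exists_eq_add hΩ (isPreconnected_iff_preconnectedSpace.mpr inferInstance)
      h₁ h₂ hd₁ hd₂⟩

/-- if `ψ` is a C² spacelike (`|∇ψ|<1`) solution of the maximal surface
equation on a simply connected `Ω` and `φ` satisfies `φ_x = ψ_y/√(1−|∇ψ|²)`,
`φ_y = −ψ_x/√(1−|∇ψ|²)`, then `φ` solves the minimal surface equation; moreover any
two such `φ` differ by an additive constant on `Ω` (the correspondence is one-to-one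
up to additive constants). -/
theorem stmt_2 (Ω : Set (ℝ × ℝ)) (hΩ : IsOpen Ω) (hsc : SimplyConnectedSpace Ω)
    (ψ : ℝ × ℝ → ℝ) (hψ : ContDiffOn ℝ 2 ψ Ω)
    (hsp : ∀ z ∈ Ω, (px ψ z) ^ 2 + (py ψ z) ^ 2 < 1)
    (hmax : MaximalSurfaceEq ψ Ω)
    (φ : ℝ × ℝ → ℝ) (hφd : DifferentiableOn ℝ φ Ω)
    (hdual : ∀ z ∈ Ω, px φ z = py ψ z / Wm ψ z ∧ py φ z = -(px ψ z) / Wm ψ z) :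
    MinimalSurfaceEq φ Ω ∧
    ∀ φ₁ φ₂ : ℝ × ℝ → ℝ, DifferentiableOn ℝ φ₁ Ω → DifferentiableOn ℝ φ₂ Ω →
      (∀ z ∈ Ω, px φ₁ z = py ψ z / Wm ψ z ∧ py φ₁ z = -(px ψ z) / Wm ψ z) →
      (∀ z ∈ Ω, px φ₂ z = py ψ z / Wm ψ z ∧ py φ₂ z = -(px ψ z) / Wm ψ z) →
      ∃ c : ℝ, ∀ z ∈ Ω, φ₁ z = φ₂ z + c :=
  stmt_2_general Ω hΩ hsc ψ hψ hsp φ hdual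
end

section
/- Let f = h + conj(g) : 𝔻 → ℂ be harmonic with h, g holomorphic and ω = g'/h' admitting a holomorphic square root, and let F(w) = 2i ∫₀^w √(h'g') dζ. Then the map X(w) = (Re f(w), Im f(w), Im F(w)) into ℝ³ with Lorentzian signature (+,+,−) satisfies Φ₁² + Φ₂² − Φ₃² = 0, where Φⱼ = ∂Xⱼ/∂w. -/
/-- Wirtinger derivative `∂X/∂w = (∂X/∂u − i ∂X/∂v)/2` of a real-valued function on `ℂ`. -/
noncomputable def wirt (X : ℂ → ℝ) (w : ℂ) : ℂ :=
  (((fderiv ℝ X w 1 : ℝ) : ℂ) - Complex.I * ((fderiv ℝ X w Complex.I : ℝ) : ℂ)) / 2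

lemma wirt_comp (L : ℂ →L[ℝ] ℝ) (φ : ℂ → ℂ) (w : ℂ) (hφ : DifferentiableAt ℂ φ w) :
    wirt (fun z => L (φ z)) w =
      ((L (deriv φ w) : ℝ) - Complex.I * (L (deriv φ w * Complex.I) : ℝ)) / 2 := by
  have h1 : HasFDerivAt (fun z => L (φ z)) (L.comp (deriv φ w • (1 : ℂ →L[ℝ] ℂ))) w :=
    L.hasFDerivAt.comp w hφ.hasDerivAt.complexToReal_fderiv
  simp [wirt, h1.fderiv, smul_eq_mul]

lemma wirt_re (φ : ℂ → ℂ) (w : ℂ) (hφ : DifferentiableAt ℂ φ w) :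
    wirt (fun z => (φ z).re) w = deriv φ w / 2 := by
  have := wirt_comp Complex.reCLM φ w hφ
  simp only [Complex.reCLM_apply] at this
  rw [this]
  apply Complex.ext <;> simp

lemma wirt_im (φ : ℂ → ℂ) (w : ℂ) (hφ : DifferentiableAt ℂ φ w) :
    wirt (fun z => (φ z).im) w = -Complex.I * deriv φ w / 2 := by
  have := wirt_comp Complex.imCLM φ w hφ
  simp only [Complex.imCLM_apply] at this
  rw [this]
  apply Complex.ext <;> simp

/-- for a harmonic mapping `f = h + conj g` on the unit disk, `ω = g'/h'`
with holomorphic square root `s`, and `F(w) = 2i∫₀^w √(h'g')` (encoded by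
`F' = 2i·s·h'`, `F(0)=0`), the map `X = (Re f, Im f, Im F)` into `ℝ³` with signature
`(+,+,−)` satisfies `Φ₁² + Φ₂² − Φ₃² = 0` for the Wirtinger derivatives `Φⱼ = ∂Xⱼ/∂w`. -/
theorem stmt_6 (h g s F : ℂ → ℂ)
    (hh : DifferentiableOn ℂ h (Metric.ball 0 1))
    (hg : DifferentiableOn ℂ g (Metric.ball 0 1))
    (hs : DifferentiableOn ℂ s (Metric.ball 0 1))
    (hsq : ∀ w ∈ Metric.ball (0:ℂ) 1, s w ^ 2 * deriv h w = deriv g w)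
    (hF : DifferentiableOn ℂ F (Metric.ball 0 1))
    (hF' : ∀ w ∈ Metric.ball (0:ℂ) 1, deriv F w = 2 * Complex.I * (s w * deriv h w))
    (hF0 : F 0 = 0) :
    ∀ w ∈ Metric.ball (0:ℂ) 1,
      (wirt (fun z => (h z + (starRingEnd ℂ) (g z)).re) w) ^ 2 +
        (wirt (fun z => (h z + (starRingEnd ℂ) (g z)).im) w) ^ 2 -
        (wirt (fun z => (F z).im) w) ^ 2 = 0 := by
  intro w hw
  have hho : IsOpen (Metric.ball (0:ℂ) 1) := Metric.isOpen_ball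
  have dh : DifferentiableAt ℂ h w := (hh w hw).differentiableAt (hho.mem_nhds hw)
  have dg : DifferentiableAt ℂ g w := (hg w hw).differentiableAt (hho.mem_nhds hw)
  have dF : DifferentiableAt ℂ F w := (hF w hw).differentiableAt (hho.mem_nhds hw)
  have e1 : (fun z => (h z + (starRingEnd ℂ) (g z)).re) = fun z => ((h z + g z).re) := by
    funext z; simp
  have e2 : (fun z => (h z + (starRingEnd ℂ) (g z)).im) = fun z => ((h z - g z).im) := by
    funext z; simp [sub_eq_add_neg]
  rw [e1, e2, wirt_re (fun z => h z + g z) _ (dh.add dg), wirt_im (fun z => h z - g z) _ (dh.sub dg), wirt_im _ _ dF,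
    deriv_fun_add dh dg, deriv_fun_sub dh dg, hF' w hw]
  linear_combination (-deriv h w) * hsq w hw +
    ((deriv h w - deriv g w)^2/4 - (Complex.I^2 - 1) * (s w * deriv h w)^2) * Complex.I_sq
end
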